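/- arXiv:2012.10134 — 5 statements merged into one kernel-verified Lean document; each statement's English description precedes it below -/
import Mathlib

section
/- Let U be an affine unital of order n with parallelism π. The π-closure U^π, obtained by adding one new point per parallel class incident with all short blocks of that class, and one new block incident with the n+1 new points, is a unital of order n, i.e., a 2-(n^3+1, n+1, 1) design. -/
/-!
Every block of the closure has `n + 1` points: a short block gains the point at infinity of its
class, a long block gains nothing. Two old points are joined as in `U`; two points at infinity only
by the block at infinity, since every other block meets infinity at most once. An old point `p` and
the point at infinity of class `i` are joined by the unique block of class `i` through `p`:
the `n ^ 2 - 1` pairwise disjoint blocks of size `n` in a class cover `n ^ 3 - n` points,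
i.e. all of `U`.
-/

open Finset

theorem existsUnique_mem_of_pairwiseDisjoint {P : Type*} [Fintype P] [DecidableEq P]
    {S : Finset (Finset P)} {n : ℕ} (hdisj : (S : Set (Finset P)).PairwiseDisjoint id)
    (hcard : ∀ b ∈ S, b.card = n) (hS : S.card * n = Fintype.card P) (p : P) :
    ∃! b, b ∈ S ∧ p ∈ b := by
  have hcover : S.biUnion id = univ := by
    refine eq_univ_of_card _ ?_
    rw [card_biUnion hdisj, ← hS, ← smul_eq_mul, ← sum_const]
    exact sum_congr rfl hcard
  obtain ⟨b, hb, hpb⟩ := mem_biUnion.1 (hcover ▸ mem_univ p)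
  refine ⟨b, ⟨hb, hpb⟩, fun b' ⟨hb', hpb'⟩ => ?_⟩
  by_contra hne
  exact disjoint_left.1 (hdisj hb' hb hne) hpb' hpb

theorem existsUnique_mem_parallelClass {P ι : Type*} [Fintype P] [DecidableEq P] [DecidableEq ι]
    {B : Finset (Finset P)} {n : ℕ} {π : Finset P → ι}
    (hπdisj : ∀ b₁ ∈ B, ∀ b₂ ∈ B, b₁.card = n → b₂.card = n → π b₁ = π b₂ →
      b₁ ≠ b₂ → Disjoint b₁ b₂)
    {i : ι} (hsize : (B.filter fun b => b.card = n ∧ π b = i).card * n = Fintype.card P)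
    (p : P) : ∃! b, b ∈ B ∧ p ∈ b ∧ b.card = n ∧ π b = i := by
  set C := B.filter fun b => b.card = n ∧ π b = i
  have hdisj : (C : Set (Finset P)).PairwiseDisjoint id := fun b₁ h₁ b₂ h₂ hne => by
    obtain ⟨hb₁, hn₁, hi₁⟩ := mem_filter.1 (mem_coe.1 h₁)
    obtain ⟨hb₂, hn₂, hi₂⟩ := mem_filter.1 (mem_coe.1 h₂)
    exact hπdisj b₁ hb₁ b₂ hb₂ hn₁ hn₂ (hi₁.trans hi₂.symm) hne
  refine (existsUnique_congr fun b => ?_).1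
    (existsUnique_mem_of_pairwiseDisjoint hdisj (fun b hb => (mem_filter.1 hb).2.1) hsize p)
  rw [mem_filter]
  tauto

namespace AffineUnital

variable {P ι : Type*} [DecidableEq P] [DecidableEq ι] (n : ℕ) (π : Finset P → ι)

def closureBlock (b : Finset P) : Finset (P ⊕ ι) :=
  if b.card = n then insert (Sum.inr (π b)) (b.image Sum.inl) else b.image Sum.inl

variable {n π}

@[simp]
theorem inl_mem_closureBlock {b : Finset P} {p : P} :
    (Sum.inl p : P ⊕ ι) ∈ closureBlock n π b ↔ p ∈ b := by
  unfold closureBlock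
  split_ifs <;> simp

@[simp]
theorem inr_mem_closureBlock {b : Finset P} {i : ι} :
    (Sum.inr i : P ⊕ ι) ∈ closureBlock n π b ↔ b.card = n ∧ π b = i := by
  unfold closureBlock
  split_ifs with h <;> simp [h, eq_comm]

theorem card_closureBlock {b : Finset P} (hb : b.card = n ∨ b.card = n + 1) :
    (closureBlock n π b).card = n + 1 := by
  unfold closureBlock
  split_ifs with h
  · rw [card_insert_of_notMem (by simp), card_image_of_injective _ Sum.inl_injective, h]
  · rw [card_image_of_injective _ Sum.inl_injective, hb.resolve_left h]

variable [Fintype ι]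

variable (P ι) in
def blockAtInfinity : Finset (P ⊕ ι) :=
  univ.image Sum.inr

variable (n π) in
def closureBlocks (B : Finset (Finset P)) : Finset (Finset (P ⊕ ι)) :=
  B.image (closureBlock n π) ∪ {blockAtInfinity P ι}

@[simp]
theorem inl_notMem_blockAtInfinity {p : P} : (Sum.inl p : P ⊕ ι) ∉ blockAtInfinity P ι := by
  simp [blockAtInfinity]

theorem card_blockAtInfinity : (blockAtInfinity P ι).card = Fintype.card ι := by
  rw [blockAtInfinity, card_image_of_injective _ Sum.inr_injective, card_univ]

theorem mem_closureBlocks {B : Finset (Finset P)} {c : Finset (P ⊕ ι)} :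
    c ∈ closureBlocks n π B ↔
      (∃ b ∈ B, closureBlock n π b = c) ∨ c = blockAtInfinity P ι := by
  simp only [closureBlocks, mem_union, mem_image, mem_singleton]

theorem existsUnique_mem_closureBlocks {B : Finset (Finset P)} {q : Finset (P ⊕ ι) → Prop}
    (h : ∃! b, b ∈ B ∧ q (closureBlock n π b)) (hinf : ¬ q (blockAtInfinity P ι)) :
    ∃! c, c ∈ closureBlocks n π B ∧ q c := by
  obtain ⟨b, ⟨hb, hqb⟩, hu⟩ := h
  refine ⟨closureBlock n π b, ⟨mem_closureBlocks.2 (.inl ⟨b, hb, rfl⟩), hqb⟩, ?_⟩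
  rintro c ⟨hc, hqc⟩
  rcases mem_closureBlocks.1 hc with ⟨b', hb', rfl⟩ | rfl
  · rw [hu b' ⟨hb', hqc⟩]
  · exact absurd hqc hinf

theorem existsUnique_inr_mem_closureBlocks {B : Finset (Finset P)} {i j : ι} (hij : i ≠ j) :
    ∃! c, c ∈ closureBlocks n π B ∧ Sum.inr i ∈ c ∧ Sum.inr j ∈ c := by
  refine ⟨blockAtInfinity P ι,
    ⟨mem_closureBlocks.2 (.inr rfl), by simp [blockAtInfinity]⟩, ?_⟩
  rintro c ⟨hc, hic, hjc⟩
  rcases mem_closureBlocks.1 hc with ⟨b, -, rfl⟩ | rfl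
  · exact absurd ((inr_mem_closureBlock.1 hic).2.symm.trans (inr_mem_closureBlock.1 hjc).2) hij
  · rfl

theorem existsUnique_join_closureBlocks {B : Finset (Finset P)}
    (hjoin : ∀ p q : P, p ≠ q → ∃! b, b ∈ B ∧ p ∈ b ∧ q ∈ b)
    (hclass : ∀ (i : ι) (p : P), ∃! b, b ∈ B ∧ p ∈ b ∧ b.card = n ∧ π b = i)
    {x y : P ⊕ ι} (hxy : x ≠ y) :
    ∃! c, c ∈ closureBlocks n π B ∧ x ∈ c ∧ y ∈ c := by
  rcases x with p | i <;> rcases y with q | j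
  · refine existsUnique_mem_closureBlocks ?_ (by simp)
    simpa using hjoin p q fun h => hxy (h ▸ rfl)
  · refine existsUnique_mem_closureBlocks ?_ (by simp)
    simpa using hclass j p
  · refine existsUnique_mem_closureBlocks ?_ (by simp)
    simpa [and_comm] using hclass i q
  · exact existsUnique_inr_mem_closureBlocks fun h => hxy (h ▸ rfl)

end AffineUnital

open AffineUnital in
theorem affine_unital_closure_is_unital_general (n : ℕ)
    (P : Type) [Fintype P] [DecidableEq P] (B : Finset (Finset P))
    -- (AU1)
    (hpoints : Fintype.card P = n ^ 3 - n)
    -- (AU2)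
    (hblock : ∀ b ∈ B, b.card = n ∨ b.card = n + 1)
    -- (AU4)
    (hjoin : ∀ x y : P, x ≠ y → ∃! b, b ∈ B ∧ x ∈ b ∧ y ∈ b)
    -- (AU5) the parallelism π on the short blocks
    (π : Finset P → Fin (n + 1))
    (hπsize : ∀ i : Fin (n + 1),
      (B.filter (fun b => b.card = n ∧ π b = i)).card = n ^ 2 - 1)
    (hπdisj : ∀ b₁ ∈ B, ∀ b₂ ∈ B, b₁.card = n → b₂.card = n → π b₁ = π b₂ →
      b₁ ≠ b₂ → Disjoint b₁ b₂) :
    -- the π-closure: new points `Sum.inr i`, short blocks extended by the new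
    -- point of their parallel class, plus the block at infinity
    ∀ B' : Finset (Finset (P ⊕ Fin (n + 1))),
      B' = (B.image fun b =>
              if b.card = n then insert (Sum.inr (π b)) (b.image Sum.inl)
              else b.image Sum.inl)
            ∪ {(Finset.univ : Finset (Fin (n + 1))).image Sum.inr} →
      (Fintype.card (P ⊕ Fin (n + 1)) = n ^ 3 + 1 ∧
       (∀ b ∈ B', b.card = n + 1) ∧
       (∀ x y : P ⊕ Fin (n + 1), x ≠ y → ∃! b, b ∈ B' ∧ x ∈ b ∧ y ∈ b)) := by
  intro B' hB'
  replace hB' : B' = closureBlocks n π B := hB'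
  subst hB'
  have hclass (i : Fin (n + 1)) (p : P) : ∃! b, b ∈ B ∧ p ∈ b ∧ b.card = n ∧ π b = i :=
    existsUnique_mem_parallelClass hπdisj
      (by rw [hπsize, hpoints, Nat.sub_mul, one_mul, ← pow_succ]) p
  refine ⟨?_, ?_, fun x y hxy => existsUnique_join_closureBlocks hjoin hclass hxy⟩
  · rw [Fintype.card_sum, hpoints, Fintype.card_fin]
    have := Nat.le_self_pow (by norm_num : 3 ≠ 0) n
    omega
  · intro c hc
    rcases mem_closureBlocks.1 hc with ⟨b, hb, rfl⟩ | rfl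
    · exact card_closureBlock (hblock b hb)
    · rw [card_blockAtInfinity, Fintype.card_fin]

/-- The π-closure of an affine unital of order `n` — obtained by adding one new
point per parallel class (incident with all short blocks of that class) and one
new block incident with the `n+1` new points — is a unital of order `n`,
i.e. a 2-(n³+1, n+1, 1) design. -/
theorem affine_unital_closure_is_unital (n : ℕ) (hn : 2 ≤ n)
    (P : Type) [Fintype P] [DecidableEq P] (B : Finset (Finset P))
    -- (AU1)
    (hpoints : Fintype.card P = n ^ 3 - n)
    -- (AU2)
    (hblock : ∀ b ∈ B, b.card = n ∨ b.card = n + 1)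
    -- (AU3)
    (hdeg : ∀ p : P, (B.filter (fun b => p ∈ b)).card = n ^ 2)
    -- (AU4)
    (hjoin : ∀ x y : P, x ≠ y → ∃! b, b ∈ B ∧ x ∈ b ∧ y ∈ b)
    -- (AU5) the parallelism π on the short blocks
    (π : Finset P → Fin (n + 1))
    (hπsize : ∀ i : Fin (n + 1),
      (B.filter (fun b => b.card = n ∧ π b = i)).card = n ^ 2 - 1)
    (hπdisj : ∀ b₁ ∈ B, ∀ b₂ ∈ B, b₁.card = n → b₂.card = n → π b₁ = π b₂ →
      b₁ ≠ b₂ → Disjoint b₁ b₂) :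
    -- the π-closure: new points `Sum.inr i`, short blocks extended by the new
    -- point of their parallel class, plus the block at infinity
    ∀ B' : Finset (Finset (P ⊕ Fin (n + 1))),
      B' = (B.image fun b =>
              if b.card = n then insert (Sum.inr (π b)) (b.image Sum.inl)
              else b.image Sum.inl)
            ∪ {(Finset.univ : Finset (Fin (n + 1))).image Sum.inr} →
      (Fintype.card (P ⊕ Fin (n + 1)) = n ^ 3 + 1 ∧
       (∀ b ∈ B', b.card = n + 1) ∧
       (∀ x y : P ⊕ Fin (n + 1), x ≠ y → ∃! b, b ∈ B' ∧ x ∈ b ∧ y ∈ b)) :=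
  affine_unital_closure_is_unital_general n P B hpoints hblock hjoin π hπsize hπdisj
end

section
/- Any two distinct Sylow p-subgroups of SL(2,q) intersect trivially, where q is a power of the prime p. -/
/-!
A Sylow `p`-subgroup `T` of `SL(2, q)` acts on `F²`, whose order is divisible by `p`, and fixes
`0`; hence it fixes some `v ≠ 0`. The stabilizer of `v` is conjugate to the unipotent group
`{!![1, b; 0, 1]}` of order `q`, so it is a `p`-group and `T = stabilizer v` by maximality.
Stabilizers of proportional vectors coincide, and a matrix fixing two independent vectors is `1`;
so distinct Sylow subgroups are stabilizers of independent vectors and meet trivially.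
-/

open MulAction
open scoped MatrixGroups

theorem Sylow.exists_eq_stabilizer_of_prime_dvd_card {p : ℕ} [Fact p.Prime] {G α : Type*}
    [Group G] [MulAction G α] [Finite α] (P : Sylow p G) (hpα : p ∣ Nat.card α) {a : α}
    (ha : ∀ g : G, g • a = a) (hstab : ∀ b, b ≠ a → IsPGroup p (stabilizer G b)) :
    ∃ b, b ≠ a ∧ (P : Subgroup G) = stabilizer G b := by
  obtain ⟨b, hb, hab⟩ :=
    P.isPGroup'.exists_fixed_point_of_prime_dvd_card_of_fixed_point α hpα (a := a) fun g ↦ ha g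
  have hle : (P : Subgroup G) ≤ stabilizer G b := fun g hg ↦ hb ⟨g, hg⟩
  exact ⟨b, hab.symm, (P.is_maximal' (hstab b hab.symm) hle).symm⟩

namespace Matrix.SpecialLinearGroup

theorem eq_one_of_smul_eq_self_of_span_eq_top {ι R : Type*} [Fintype ι] [DecidableEq ι]
    [CommRing R] {s : Set (ι → R)} (hs : Submodule.span R s = ⊤)
    {g : SpecialLinearGroup ι R} (hg : ∀ v ∈ s, g • v = v) : g = 1 := by
  apply toLin'_injective
  rw [map_one]
  exact LinearEquiv.toLinearMap_injective (LinearMap.ext_on hs hg)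

section CommRing

variable {R : Type*} [CommRing R]

def stabilizerSingleZeroEquiv : R ≃ stabilizer SL(2, R) (Pi.single 0 1 : Fin 2 → R) where
  toFun b := ⟨transvection zero_ne_one b, transvection_smul_single_fst zero_ne_one b⟩
  invFun g := g.1 0 1
  left_inv b := by simp [transvection_coe]
  right_inv := by
    rintro ⟨g, hg⟩
    have hcol : g.1 *ᵥ Pi.single 0 1 = Pi.single 0 1 := mem_stabilizer_iff.mp hg
    have h00 : g 0 0 = 1 := by simpa using congrFun hcol 0
    have h10 : g 1 0 = 0 := by simpa using congrFun hcol 1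
    have h11 : g 1 1 = 1 := by
      have hdet := g.2
      rwa [det_fin_two, h00, h10, one_mul, mul_zero, sub_zero] at hdet
    ext i j
    fin_cases i <;> fin_cases j <;> simp [transvection_coe, h00, h10, h11]

theorem exists_smul_single_zero_eq_of_isCoprime {v : Fin 2 → R} (hv : IsCoprime (v 0) (v 1)) :
    ∃ g : SL(2, R), g • (Pi.single 0 1 : Fin 2 → R) = v := by
  obtain ⟨g, h0, h1⟩ := hv.exists_SL2_col 0
  exact ⟨g, by ext i; fin_cases i <;> simp [SpecialLinearGroup.smul_def, h0, h1]⟩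

end CommRing

section Field

variable {F : Type*} [Field F]

theorem exists_smul_single_zero_eq {v : Fin 2 → F} (hv : v ≠ 0) :
    ∃ g : SL(2, F), g • (Pi.single 0 1 : Fin 2 → F) = v := by
  refine exists_smul_single_zero_eq_of_isCoprime ?_
  by_cases h0 : v 0 = 0
  · have h1 : v 1 ≠ 0 := fun h1 ↦ hv (by ext i; fin_cases i <;> simp [h0, h1])
    exact ⟨0, (v 1)⁻¹, by simp [h1]⟩
  · exact ⟨(v 0)⁻¹, 0, by simp [h0]⟩

theorem card_stabilizer_of_ne_zero {v : Fin 2 → F} (hv : v ≠ 0) :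
    Nat.card (stabilizer SL(2, F) v) = Nat.card F := by
  obtain ⟨g, rfl⟩ := exists_smul_single_zero_eq hv
  rw [stabilizer_smul_eq_stabilizer_map_conj,
    ← Nat.card_congr (Subgroup.equivMapOfInjective _ _ (MulAut.conj g).injective).toEquiv,
    Nat.card_congr stabilizerSingleZeroEquiv.symm]

theorem stabilizer_eq_of_not_linearIndependent {v w : Fin 2 → F} (hv : v ≠ 0) (hw : w ≠ 0)
    (hvw : ¬LinearIndependent F ![v, w]) : stabilizer SL(2, F) v = stabilizer SL(2, F) w := by
  obtain ⟨a, rfl⟩ : ∃ a : F, a • w = v := by simpa [linearIndependent_fin2, hw] using hvw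
  have ha : a ≠ 0 := by rintro rfl; simp at hv
  exact stabilizer_smul_eq_right (Units.mk0 a ha) w

theorem stabilizer_inf_stabilizer_eq_bot {v w : Fin 2 → F} (hvw : LinearIndependent F ![v, w]) :
    stabilizer SL(2, F) v ⊓ stabilizer SL(2, F) w = ⊥ := by
  rw [Subgroup.eq_bot_iff_forall]
  rintro g ⟨hgv, hgw⟩
  refine eq_one_of_smul_eq_self_of_span_eq_top (hvw.span_eq_top_of_card_eq_finrank' (by simp)) ?_
  rintro _ ⟨i, rfl⟩
  fin_cases i
  exacts [hgv, hgw]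

theorem exists_ne_zero_sylow_eq_stabilizer [Finite F] {p e : ℕ} [Fact p.Prime]
    (hF : Nat.card F = p ^ e) (T : Sylow p SL(2, F)) :
    ∃ v : Fin 2 → F, v ≠ 0 ∧ (T : Subgroup SL(2, F)) = stabilizer SL(2, F) v := by
  have he : e ≠ 0 := by
    rintro rfl
    simpa [hF] using Finite.one_lt_card (α := F)
  have hdvd : p ∣ Nat.card (Fin 2 → F) := by
    rw [Nat.card_fun, hF, Nat.card_fin]
    exact dvd_pow (dvd_pow_self p he) two_ne_zero
  refine T.exists_eq_stabilizer_of_prime_dvd_card hdvd (fun g ↦ smul_zero g) fun v hv ↦ ?_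
  exact IsPGroup.of_card (by rw [card_stabilizer_of_ne_zero hv, hF])

end Field

end Matrix.SpecialLinearGroup

open Matrix.SpecialLinearGroup

theorem sl2_sylow_trivial_intersection_general (p e : ℕ) [Fact p.Prime]
    (F : Type) [Field F] [Fintype F]
    (hF : Fintype.card F = p ^ e) :
    ∀ T U : Sylow p (Matrix.SpecialLinearGroup (Fin 2) F), T ≠ U →
      (T : Subgroup (Matrix.SpecialLinearGroup (Fin 2) F)) ⊓
        (U : Subgroup (Matrix.SpecialLinearGroup (Fin 2) F)) = ⊥ := by
  intro T U hTU
  rw [← Nat.card_eq_fintype_card] at hF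
  obtain ⟨v, hv, hTv⟩ := exists_ne_zero_sylow_eq_stabilizer hF T
  obtain ⟨w, hw, hUw⟩ := exists_ne_zero_sylow_eq_stabilizer hF U
  rw [hTv, hUw]
  refine stabilizer_inf_stabilizer_eq_bot (by_contra fun hvw ↦ hTU (Sylow.ext ?_))
  rw [hTv, hUw, stabilizer_eq_of_not_linearIndependent hv hw hvw]

/-- Any two distinct Sylow `p`-subgroups of `SL(2,q)` intersect trivially,
where `q = p^e` is a power of the prime `p`. -/
theorem sl2_sylow_trivial_intersection (p e : ℕ) (hp : p.Prime) [Fact p.Prime]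
    (he : 0 < e) (F : Type) [Field F] [Fintype F] [DecidableEq F]
    (hF : Fintype.card F = p ^ e) :
    ∀ T U : Sylow p (Matrix.SpecialLinearGroup (Fin 2) F), T ≠ U →
      (T : Subgroup (Matrix.SpecialLinearGroup (Fin 2) F)) ⊓
        (U : Subgroup (Matrix.SpecialLinearGroup (Fin 2) F)) = ⊥ :=
  sl2_sylow_trivial_intersection_general p e F hF
end

section
/- Every subgroup of SL(2,8) of order 9 is cyclic. -/
/-!
A nontrivial `A ∈ SL(2, K)` with `A³ = 1`, `K` of characteristic 2, satisfies `A² = A + 1`: by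
Cayley–Hamilton `A² = tA + 1` with `t = tr A`, so `A³ = 1` forces `(t + 1)² A = (t + 1)`, and
`t ≠ 1` would make `A` a scalar of square `det A = 1`, i.e. `A = 1`. For commuting such `X`, `Y`
with `XY ≠ 1`, expanding `(XY)² = (X + 1)(Y + 1)` against `(XY)² = XY + 1` gives `X = Y`, so the
elements of order 3 commuting with `X` lie in `⟨X⟩`. A noncyclic group of order 9 is abelian of
exponent 3, hence would be contained in such a `⟨X⟩`.
-/

theorem Matrix.sq_eq_trace_smul_sub_det_smul {R : Type*} [CommRing R]
    (A : Matrix (Fin 2) (Fin 2) R) : A ^ 2 = A.trace • A - A.det • 1 := by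
  ext i j
  fin_cases i <;> fin_cases j <;>
    simp [sq, Matrix.mul_apply, Fin.sum_univ_two, Matrix.trace_fin_two, Matrix.det_fin_two] <;> ring

theorem CharTwo.eq_of_commute_of_sq_eq_add_one {R : Type*} [Ring R] [CharP R 2] {a b : R}
    (hab : Commute a b) (ha : a ^ 2 = a + 1) (hb : b ^ 2 = b + 1)
    (hab' : (a * b) ^ 2 = a * b + 1) : a = b := by
  have : (a * b) ^ 2 = a * b + 1 + (a + b) := by
    rw [hab.mul_pow, ha, hb]; noncomm_ring
  rwa [hab', left_eq_add, CharTwo.add_eq_zero] at this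

namespace Matrix.SpecialLinearGroup

variable {K : Type*} [Field K] [CharP K 2]

theorem sq_coe_eq_coe_add_one_of_pow_three_eq_one {x : SpecialLinearGroup (Fin 2) K}
    (hx : x ^ 3 = 1) (hx1 : x ≠ 1) : (x : Matrix (Fin 2) (Fin 2) K) ^ 2 = x + 1 := by
  set A : Matrix (Fin 2) (Fin 2) K := ↑x with hA
  set t := A.trace
  have hsq : A ^ 2 = t • A + 1 := by
    rw [sq_eq_trace_smul_sub_det_smul, x.2, one_smul, CharTwo.sub_eq_add]
  have hcube : (t + 1) ^ 2 • A = (t + 1) • 1 := by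
    have h3 : A ^ 3 = 1 := by rw [hA, ← coe_pow, hx, coe_one]
    have : A ^ 3 = (t + 1) ^ 2 • A + t • 1 := by
      rw [pow_succ', hsq, mul_add, mul_one, mul_smul_comm, ← sq, hsq, CharTwo.add_sq]
      module
    rw [h3, eq_comm, CharTwo.add_eq_iff_eq_add] at this
    rw [this, add_smul, one_smul, add_comm]
  by_cases ht : t = 1
  · rw [hsq, ht, one_smul]
  have ht1 : t + 1 ≠ 0 := by rwa [Ne, CharTwo.add_eq_zero]
  have hscalar : A = (t + 1)⁻¹ • 1 := by
    rw [eq_inv_smul_iff₀ ht1]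
    rw [sq, mul_smul] at hcube
    exact smul_right_injective _ ht1 hcube
  have hinv : (t + 1)⁻¹ = 1 := by
    have hdet : A.det = 1 := x.2
    rw [hscalar, det_smul, det_one, Fintype.card_fin, mul_one] at hdet
    exact CharTwo.sq_injective (hdet.trans (one_pow 2).symm)
  exact absurd (Subtype.ext (by rw [coe_one, ← hA, hscalar, hinv, one_smul])) hx1

theorem mem_zpowers_of_commute_of_pow_three_eq_one {x y : SpecialLinearGroup (Fin 2) K}
    (hx : x ^ 3 = 1) (hx1 : x ≠ 1) (hy : y ^ 3 = 1) (hxy : Commute x y) :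
    y ∈ Subgroup.zpowers x := by
  by_cases hy1 : y = 1
  · exact hy1 ▸ one_mem _
  by_cases hxy1 : x * y = 1
  · exact eq_inv_of_mul_eq_one_right hxy1 ▸ inv_mem (Subgroup.mem_zpowers x)
  have hxy3 : (x * y) ^ 3 = 1 := by rw [hxy.mul_pow, hx, hy, one_mul]
  have hyx : x = y := coeMonoidHom_injective <|
    CharTwo.eq_of_commute_of_sq_eq_add_one (hxy.map coeMonoidHom)
      (sq_coe_eq_coe_add_one_of_pow_three_eq_one hx hx1)
      (sq_coe_eq_coe_add_one_of_pow_three_eq_one hy hy1)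
      (by simpa using sq_coe_eq_coe_add_one_of_pow_three_eq_one hxy3 hxy1)
  exact hyx ▸ Subgroup.mem_zpowers x

theorem isCyclic_of_forall_pow_three_eq_one (H : Subgroup (SpecialLinearGroup (Fin 2) K))
    [IsMulCommutative H] (hH : ∀ g : H, g ^ 3 = 1) : IsCyclic H := by
  rcases subsingleton_or_nontrivial H with _ | _
  · exact isCyclic_of_subsingleton
  obtain ⟨x, hx1⟩ := exists_ne (1 : H)
  refine ⟨x, fun y => ?_⟩
  obtain ⟨k, hk⟩ := Subgroup.mem_zpowers_iff.mp <|
    mem_zpowers_of_commute_of_pow_three_eq_one (congrArg Subtype.val (hH x))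
      (Subtype.coe_ne_coe.mpr hx1) (congrArg Subtype.val (hH y))
      (congrArg Subtype.val (mul_comm' x y))
  exact ⟨k, Subtype.ext (by simpa using hk)⟩

end Matrix.SpecialLinearGroup

/-- Every subgroup of `SL(2,8)` of order 9 is cyclic. -/
theorem sl2_8_order_nine_subgroup_cyclic
    (H : Subgroup (Matrix.SpecialLinearGroup (Fin 2) (GaloisField 2 3)))
    (hH : Nat.card H = 9) : IsCyclic H := by
  have hcard : Nat.card H = 3 ^ 2 := hH
  have : IsMulCommutative H := IsPGroup.isMulCommutative_of_card_eq_prime_sq hcard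
  by_contra hcyc
  have hexp : Monoid.exponent H = 3 :=
    (not_isCyclic_iff_exponent_eq_prime Nat.prime_three hcard).mp hcyc
  exact hcyc <| Matrix.SpecialLinearGroup.isCyclic_of_forall_pow_three_eq_one H
    (Monoid.exponent_dvd_iff_forall_pow_eq_one.mp hexp.dvd)
end

section
/- Let G = SL(2,q) with Sylow p-subgroup set 𝔓. The collection ♮ = { {gT : g ∈ G} : T ∈ 𝔓 } of left-coset families also partitions the set of all right cosets of all Sylow p-subgroups (each right coset Tg being the left coset g T^g) into q+1 classes of q^2-1 pairwise disjoint cosets each; moreover ♮ ≠ ♭ when q > 2. -/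
open Matrix

namespace SL2Parallelism

open scoped Pointwise

open Matrix
variable {F : Type} [Field F] [Fintype F] [DecidableEq F]
local notation "SL2" => Matrix.SpecialLinearGroup (Fin 2) F
local notation "q" => Fintype.card F

def fixv (v : Fin 2 → F) : Subgroup SL2 where
  carrier := {A | (A : Matrix (Fin 2) (Fin 2) F) *ᵥ v = v}
  one_mem' := by simp only [Set.mem_setOf_eq, Matrix.SpecialLinearGroup.coe_one, Matrix.one_mulVec]
  mul_mem' := by
    intro a b ha hb
    simp only [Set.mem_setOf_eq] at *
    rw [Matrix.SpecialLinearGroup.coe_mul, ← Matrix.mulVec_mulVec, hb, ha]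
  inv_mem' := by
    intro a ha
    simp only [Set.mem_setOf_eq] at *
    conv_lhs => rw [← ha]
    rw [Matrix.mulVec_mulVec, ← Matrix.SpecialLinearGroup.coe_mul, inv_mul_cancel]
    simp

lemma mem_fixv {v : Fin 2 → F} {A : SL2} :
    A ∈ fixv v ↔ (A : Matrix (Fin 2) (Fin 2) F) *ᵥ v = v := Iff.rfl

-- conjugation
lemma mem_fixv_conj {v : Fin 2 → F} (g A : SL2) :
    A ∈ fixv ((g : Matrix (Fin 2) (Fin 2) F) *ᵥ v) ↔ g⁻¹ * A * g ∈ fixv v := by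
  rw [mem_fixv, mem_fixv]
  constructor
  · intro h
    calc ((g⁻¹ * A * g : SL2) : Matrix (Fin 2) (Fin 2) F) *ᵥ v
        = (g⁻¹ : SL2) *ᵥ ((A : Matrix (Fin 2) (Fin 2) F) *ᵥ ((g : Matrix (Fin 2) (Fin 2) F) *ᵥ v)) := by
          rw [Matrix.mulVec_mulVec, Matrix.mulVec_mulVec, Matrix.SpecialLinearGroup.coe_mul,
            Matrix.SpecialLinearGroup.coe_mul]
      _ = (g⁻¹ : SL2) *ᵥ ((g : Matrix (Fin 2) (Fin 2) F) *ᵥ v) := by rw [h]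
      _ = v := by
          rw [Matrix.mulVec_mulVec, ← Matrix.SpecialLinearGroup.coe_mul, inv_mul_cancel]
          simp
  · intro h
    calc (A : Matrix (Fin 2) (Fin 2) F) *ᵥ ((g : Matrix (Fin 2) (Fin 2) F) *ᵥ v)
        = ((A * g : SL2) : Matrix (Fin 2) (Fin 2) F) *ᵥ v := by
          rw [Matrix.mulVec_mulVec, ← Matrix.SpecialLinearGroup.coe_mul]
      _ = (g : SL2) *ᵥ (((g⁻¹ * A * g : SL2) : Matrix (Fin 2) (Fin 2) F) *ᵥ v) := by
          rw [Matrix.mulVec_mulVec, ← Matrix.SpecialLinearGroup.coe_mul]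
          congr 1
          group
      _ = (g : Matrix (Fin 2) (Fin 2) F) *ᵥ v := by rw [h]

-- smul of vector
lemma fixv_smul (c : F) (hc : c ≠ 0) (v : Fin 2 → F) : fixv (c • v) = fixv v := by
  ext A
  rw [mem_fixv, mem_fixv, Matrix.mulVec_smul]
  constructor
  · intro h
    have := congrArg (fun w => c⁻¹ • w) h
    simpa [smul_smul, inv_mul_cancel₀ hc, inv_mul_cancel_left₀ hc] using this
  · intro h; rw [h]

def fixEquiv : fixv (F := F) ![1,0] ≃ F where
  toFun A := (A : Matrix (Fin 2) (Fin 2) F) 0 1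
  invFun b := ⟨⟨!![1, b; 0, 1], by simp [Matrix.det_fin_two]⟩, by
    show (!![1, b; 0, 1] : Matrix (Fin 2) (Fin 2) F) *ᵥ ![1, 0] = ![1, 0]
    funext i
    fin_cases i <;> simp [Matrix.mulVec, dotProduct, Fin.sum_univ_two]⟩
  left_inv := by
    rintro ⟨A, hA⟩
    rw [mem_fixv] at hA
    have h0 : (A : Matrix (Fin 2) (Fin 2) F) 0 0 = 1 := by
      have := congrFun hA 0
      simpa [Matrix.mulVec, dotProduct, Fin.sum_univ_two] using this
    have h1 : (A : Matrix (Fin 2) (Fin 2) F) 1 0 = 0 := by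
      have := congrFun hA 1
      simpa [Matrix.mulVec, dotProduct, Fin.sum_univ_two] using this
    have hd : (A : Matrix (Fin 2) (Fin 2) F).det = 1 := A.2
    rw [Matrix.det_fin_two, h0, h1] at hd
    simp only [one_mul, mul_zero, sub_zero] at hd
    ext i j
    fin_cases i <;> fin_cases j <;> simp [h0, h1, hd]
  right_inv := by intro b; rfl

lemma card_fixv_std : Nat.card (fixv (F := F) ![1,0]) = Fintype.card F := by
  rw [Nat.card_congr fixEquiv, Nat.card_eq_fintype_card]

-- a matrix in SL2 sending e0 to v
lemma exists_sl2_mulVec (v : Fin 2 → F) (hv : v ≠ 0) :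
    ∃ g : SL2, (g : Matrix (Fin 2) (Fin 2) F) *ᵥ ![1, 0] = v := by
  by_cases h0 : v 0 ≠ 0
  · refine ⟨⟨!![v 0, 0; v 1, (v 0)⁻¹], by
      simp [Matrix.det_fin_two, mul_inv_cancel₀ h0]⟩, ?_⟩
    funext i
    fin_cases i <;> simp [Matrix.mulVec, dotProduct, Fin.sum_univ_two]
  · push_neg at h0
    have h1 : v 1 ≠ 0 := by
      intro h1
      apply hv
      funext i; fin_cases i <;> simp [h0, h1]
    refine ⟨⟨!![0, -(v 1)⁻¹; v 1, 0], by
      simp [Matrix.det_fin_two, inv_mul_cancel₀ h1]⟩, ?_⟩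
    funext i
    fin_cases i <;> simp [Matrix.mulVec, dotProduct, Fin.sum_univ_two, h0]

def conjFixEquiv (g : SL2) (v : Fin 2 → F) :
    fixv v ≃ fixv ((g : Matrix (Fin 2) (Fin 2) F) *ᵥ v) where
  toFun A := ⟨g * A * g⁻¹, by
    rw [mem_fixv_conj]
    have : g⁻¹ * (g * ↑A * g⁻¹) * g = A := by group
    rw [this]; exact A.2⟩
  invFun B := ⟨g⁻¹ * B * g, (mem_fixv_conj g B).mp B.2⟩
  left_inv A := by ext : 2; group
  right_inv B := by ext : 2; group

lemma card_fixv (v : Fin 2 → F) (hv : v ≠ 0) : Nat.card (fixv v) = q := by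
  obtain ⟨g, hg⟩ := exists_sl2_mulVec v hv
  have : Nat.card (fixv (F := F) ![1, 0]) = q := card_fixv_std
  rw [← this, ← hg, Nat.card_congr (conjFixEquiv g ![1, 0]).symm]

noncomputable def slEquivKer :
    SL2 ≃ MonoidHom.ker (Matrix.GeneralLinearGroup.det : GL (Fin 2) F →* Fˣ) where
  toFun A := ⟨Matrix.SpecialLinearGroup.toGL A, by simp [MonoidHom.mem_ker]⟩
  invFun g := ⟨(g : GL (Fin 2) F), by
    have := g.2
    rw [MonoidHom.mem_ker] at this
    exact congrArg Units.val this⟩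
  left_inv A := by ext : 2; rfl
  right_inv g := by ext : 3; rfl

lemma det_GL_surjective :
    Function.Surjective (Matrix.GeneralLinearGroup.det : GL (Fin 2) F →* Fˣ) := by
  intro u
  refine ⟨Matrix.GeneralLinearGroup.mkOfDetNeZero (Matrix.diagonal ![(u : F), 1]) ?_, ?_⟩
  · simpa [Matrix.det_diagonal, Fin.prod_univ_two] using u.ne_zero
  · ext
    simp [Matrix.GeneralLinearGroup.mkOfDetNeZero, Matrix.GeneralLinearGroup.mk', Matrix.unitOfDetInvertible,
      Matrix.det_diagonal, Fin.prod_univ_two]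

lemma card_SL2 : Nat.card SL2 = q * (q ^ 2 - 1) := by
  have h1 : Nat.card SL2 * Nat.card Fˣ = Nat.card (GL (Fin 2) F) := by
    rw [Nat.card_congr slEquivKer]
    have := Subgroup.card_eq_card_quotient_mul_card_subgroup
      (MonoidHom.ker (Matrix.GeneralLinearGroup.det : GL (Fin 2) F →* Fˣ))
    rw [this, mul_comm]
    congr 1
    rw [Nat.card_congr (QuotientGroup.quotientKerEquivOfSurjective _ det_GL_surjective).toEquiv]
  have hu : Nat.card Fˣ = q - 1 := by
    rw [Nat.card_eq_fintype_card, Fintype.card_units]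
  have hGL : Nat.card (GL (Fin 2) F) = (q ^ 2 - 1) * (q ^ 2 - q) := by
    rw [Matrix.card_GL_field, Fin.prod_univ_two]
    simp
  rw [hu, hGL] at h1
  have hq : 1 < q := Fintype.one_lt_card
  have key : q * (q ^ 2 - 1) * (q - 1) = (q ^ 2 - 1) * (q ^ 2 - q) := by
    have : q ^ 2 - q = q * (q - 1) := by
      rw [Nat.mul_sub, mul_one, pow_two]
    rw [this]; ring
  have := h1.trans key.symm
  exact Nat.eq_of_mul_eq_mul_right (by omega) this

section Sylow
variable (p e : ℕ) [Fact p.Prime]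

lemma padic_card_SL2 (he : 0 < e) (hF : Fintype.card F = p ^ e) : (Nat.card SL2).factorization p = e := by
  have hp : p.Prime := Fact.out
  rw [card_SL2, hF]
  have hpe : 1 ≤ (p ^ e) ^ 2 := Nat.one_le_pow _ _ (Nat.pow_pos hp.pos)
  have hm : ¬ p ∣ (p ^ e) ^ 2 - 1 := by
    intro h
    have h2 : p ∣ (p ^ e) ^ 2 := dvd_pow (dvd_pow_self p he.ne') two_ne_zero
    have h3 : p ∣ (p ^ e) ^ 2 - ((p ^ e) ^ 2 - 1) := Nat.dvd_sub h2 h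
    rw [Nat.sub_sub_self hpe] at h3
    exact hp.one_lt.not_ge (Nat.le_of_dvd one_pos h3)
  have hm0 : (p ^ e) ^ 2 - 1 ≠ 0 := by
    have : 2 ≤ p := hp.two_le
    have : 2 ≤ p ^ e := le_trans this (Nat.le_self_pow he.ne' p)
    have : 4 ≤ (p ^ e) ^ 2 := by nlinarith
    omega
  rw [Nat.factorization_mul (pow_ne_zero e hp.pos.ne') hm0]
  simp [hp.factorization_pow, Nat.factorization_eq_zero_of_not_dvd hm]

lemma card_fixv_eq (he : 0 < e) (hF : Fintype.card F = p ^ e) (v : Fin 2 → F) (hv : v ≠ 0) :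
    Nat.card (fixv v) = p ^ ((Nat.card SL2).factorization p) := by
  rw [padic_card_SL2 p e he hF, card_fixv v hv, hF]

noncomputable def sylowFix (he : 0 < e) (hF : Fintype.card F = p ^ e) (v : Fin 2 → F) (hv : v ≠ 0) : Sylow p SL2 :=
  Sylow.ofCard (fixv v) (card_fixv_eq p e he hF v hv)

lemma coe_sylowFix (he : 0 < e) (hF : Fintype.card F = p ^ e) (v : Fin 2 → F) (hv : v ≠ 0) :
    (sylowFix p e he hF v hv : Subgroup SL2) = fixv v := rfl

end Sylow

section Count
variable (p e : ℕ) [Fact p.Prime]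

lemma eq_one_of_fix_indep {A : SL2} {x y : F} {u w : Fin 2 → F}
    (h1 : A ∈ fixv u) (h2 : A ∈ fixv w)
    (hu : u = ![1, x] ∧ w = ![1, y] ∧ x ≠ y ∨ u = ![1, x] ∧ w = ![0, 1]) : A = 1 := by
  rw [mem_fixv] at h1 h2
  have e10 := congrFun h1 0
  have e11 := congrFun h1 1
  have e20 := congrFun h2 0
  have e21 := congrFun h2 1
  have hA : A 0 0 = 1 ∧ A 0 1 = 0 ∧ A 1 0 = 0 ∧ A 1 1 = 1 := by
    rcases hu with ⟨rfl, rfl, hxy⟩ | ⟨rfl, rfl⟩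
    · simp only [Matrix.mulVec, dotProduct, Fin.sum_univ_two, Matrix.cons_val_zero,
        Matrix.cons_val_one, Matrix.head_cons] at e10 e11 e20 e21
      have hxy' : x - y ≠ 0 := sub_ne_zero.mpr hxy
      have hb : A 0 1 = 0 := by
        have : A 0 1 * (x - y) = 0 := by ring_nf; linear_combination e10 - e20
        exact (mul_eq_zero.mp this).resolve_right hxy'
      have hd : A 1 1 = 1 := by
        have : (A 1 1 - 1) * (x - y) = 0 := by ring_nf; linear_combination e11 - e21
        have := (mul_eq_zero.mp this).resolve_right hxy'
        linear_combination this
      refine ⟨?_, hb, ?_, hd⟩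
      · rw [hb] at e10; linear_combination e10
      · rw [hd] at e11; linear_combination e11
    · simp only [Matrix.mulVec, dotProduct, Fin.sum_univ_two, Matrix.cons_val_zero,
        Matrix.cons_val_one, Matrix.head_cons] at e10 e11 e20 e21
      have hb : A 0 1 = 0 := by linear_combination e20
      have hd : A 1 1 = 1 := by linear_combination e21
      refine ⟨?_, hb, ?_, hd⟩
      · rw [hb] at e10; linear_combination e10
      · rw [hd] at e11; linear_combination e11
  ext i j
  fin_cases i <;> fin_cases j <;>
    simp [hA.1, hA.2.1, hA.2.2.1, hA.2.2.2, Matrix.one_apply]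

lemma exists_ne_one_fixv (v : Fin 2 → F) (hv : v ≠ 0) :
    ∃ A : SL2, A ∈ fixv v ∧ A ≠ 1 := by
  by_contra h
  push_neg at h
  have hbot : fixv v = ⊥ := by
    rw [eq_bot_iff]
    intro A hA
    simp [h A hA]
  have := card_fixv v hv
  rw [hbot, Subgroup.card_bot] at this
  have hq : 1 < Fintype.card F := Fintype.one_lt_card
  omega

lemma mulVec_ne_zero (g : SL2) (v : Fin 2 → F) (hv : v ≠ 0) :
    (g : Matrix (Fin 2) (Fin 2) F) *ᵥ v ≠ 0 := by
  intro h
  apply hv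
  have : (g⁻¹ : SL2) *ᵥ ((g : Matrix (Fin 2) (Fin 2) F) *ᵥ v) = v := by
    rw [Matrix.mulVec_mulVec, ← Matrix.SpecialLinearGroup.coe_mul, inv_mul_cancel]
    simp
  rw [← this, h, Matrix.mulVec_zero]

lemma smul_sylowFix (he : 0 < e) (hF : Fintype.card F = p ^ e) (g : SL2)
    (v : Fin 2 → F) (hv : v ≠ 0) :
    g • sylowFix p e he hF v hv
      = sylowFix p e he hF ((g : Matrix (Fin 2) (Fin 2) F) *ᵥ v) (mulVec_ne_zero g v hv) := by
  apply Sylow.ext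
  rw [Sylow.coe_subgroup_smul, coe_sylowFix, coe_sylowFix]
  ext x
  rw [Subgroup.mem_pointwise_smul_iff_inv_smul_mem]
  have hc : (MulAut.conj g)⁻¹ • x = g⁻¹ * x * g := by
    simp [MulAut.conj_inv_apply]
  rw [hc]
  exact (mem_fixv_conj g x).symm

def vecOf : Option F → Fin 2 → F
  | some c => ![1, c]
  | none => ![0, 1]

lemma vecOf_ne_zero (o : Option F) : vecOf o ≠ 0 := by
  cases o with
  | some c => intro h; have := congrFun h 0; simp [vecOf] at this
  | none => intro h; have := congrFun h 1; simp [vecOf] at this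

noncomputable def sylowOfOpt (he : 0 < e) (hF : Fintype.card F = p ^ e)
    (o : Option F) : Sylow p SL2 :=
  sylowFix p e he hF (vecOf o) (vecOf_ne_zero o)

lemma sylowOfOpt_bijective (he : 0 < e) (hF : Fintype.card F = p ^ e) :
    Function.Bijective (sylowOfOpt p e he hF) := by
  constructor
  · intro x y hxy
    by_contra hne
    have h' : fixv (vecOf x) = fixv (vecOf y) := by
      have := congrArg (fun T : Sylow p SL2 => (T : Subgroup SL2)) hxy
      simpa [sylowOfOpt, coe_sylowFix] using this
    obtain ⟨A, hA, hA1⟩ := exists_ne_one_fixv (vecOf x) (vecOf_ne_zero x)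
    apply hA1
    match x, y, hne with
    | some c, some c', hne =>
        have hcc : c ≠ c' := fun h => hne (by rw [h])
        exact eq_one_of_fix_indep hA (h' ▸ hA) (Or.inl ⟨rfl, rfl, hcc⟩)
    | some c, none, _ =>
        exact eq_one_of_fix_indep (y := 0) hA (h' ▸ hA) (Or.inr ⟨rfl, rfl⟩)
    | none, some c, _ =>
        exact eq_one_of_fix_indep (y := 0) (h' ▸ hA) hA (Or.inr ⟨rfl, rfl⟩)
  · intro T
    obtain ⟨g, hg⟩ := MulAction.exists_smul_eq SL2 (sylowOfOpt p e he hF (some 0)) T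
    have h0 : (![1, (0:F)] : Fin 2 → F) ≠ 0 := vecOf_ne_zero (some 0)
    have h00 : sylowOfOpt p e he hF (some 0) = sylowFix p e he hF ![1, 0] h0 := rfl
    rw [h00, smul_sylowFix] at hg
    set w := (g : Matrix (Fin 2) (Fin 2) F) *ᵥ ![1, 0] with hw
    have hwne : w ≠ 0 := mulVec_ne_zero g _ h0
    by_cases hw0 : w 0 = 0
    · refine ⟨none, ?_⟩
      rw [← hg]
      apply Sylow.ext
      rw [sylowOfOpt, coe_sylowFix, coe_sylowFix]
      have hw1 : w 1 ≠ 0 := by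
        intro h1; apply hwne; funext i; fin_cases i <;> simp [hw0, h1]
      have hsc : (w 1)⁻¹ • w = ![0, 1] := by
        funext i; fin_cases i <;> simp [hw0, inv_mul_cancel₀ hw1]
      rw [← fixv_smul (w 1)⁻¹ (inv_ne_zero hw1) w, hsc]
      rfl
    · refine ⟨some ((w 0)⁻¹ * w 1), ?_⟩
      rw [← hg]
      apply Sylow.ext
      rw [sylowOfOpt, coe_sylowFix, coe_sylowFix]
      have hsc : (w 0)⁻¹ • w = ![1, (w 0)⁻¹ * w 1] := by
        funext i; fin_cases i <;> simp [inv_mul_cancel₀ hw0]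
      rw [← fixv_smul (w 0)⁻¹ (inv_ne_zero hw0) w, hsc]
      rfl

lemma card_sylow_SL2 (he : 0 < e) (hF : Fintype.card F = p ^ e) :
    Nat.card (Sylow p SL2) = p ^ e + 1 := by
  rw [← Nat.card_eq_of_bijective _ (sylowOfOpt_bijective p e he hF)]
  rw [Nat.card_eq_fintype_card, Fintype.card_option, ← hF]

end Count


section Cosets
variable {G : Type*} [Group G]

lemma left_translate_eq_iff (H : Subgroup G) {g h : G} :
    (fun x => g * x) '' (H : Set G) = (fun x => h * x) '' H ↔ g⁻¹ * h ∈ H := by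
  constructor
  · intro heq
    have : h ∈ (fun x => h * x) '' (H : Set G) := ⟨1, H.one_mem, mul_one h⟩
    rw [← heq] at this
    obtain ⟨t, ht, hgt⟩ := this
    have : t = g⁻¹ * h := by rw [← hgt]; group
    rwa [this] at ht
  · intro ht
    ext x
    constructor
    · rintro ⟨a, ha, rfl⟩
      exact ⟨(g⁻¹ * h)⁻¹ * a, H.mul_mem (H.inv_mem ht) ha, by group⟩
    · rintro ⟨b, hb, rfl⟩
      exact ⟨(g⁻¹ * h) * b, H.mul_mem ht hb, by group⟩

lemma left_translate_disjoint (H : Subgroup G) {g h : G}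
    (hne : (fun x => g * x) '' (H : Set G) ≠ (fun x => h * x) '' H) :
    Disjoint ((fun x => g * x) '' (H : Set G)) ((fun x => h * x) '' H) := by
  rw [Set.disjoint_left]
  rintro x ⟨a, ha, rfl⟩ ⟨b, hb, hba⟩
  apply hne
  rw [left_translate_eq_iff]
  have : g⁻¹ * h = a * b⁻¹ := by
    have : h * b = g * a := hba
    have := congrArg (fun y => g⁻¹ * y * b⁻¹) this
    simpa [mul_assoc] using this
  rw [this]
  exact H.mul_mem ha (H.inv_mem hb)

lemma subgroup_set_eq_of_translate_eq {H K : Subgroup G} {g h : G}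
    (heq : (fun x => g * x) '' (H : Set G) = (fun x => h * x) '' K) :
    (H : Set G) = K := by
  have hgh : g⁻¹ * h ∈ H := by
    have : h ∈ (fun x => h * x) '' (K : Set G) := ⟨1, K.one_mem, mul_one h⟩
    rw [← heq] at this
    obtain ⟨t, ht, hgt⟩ := this
    have : t = g⁻¹ * h := by rw [← hgt]; group
    rwa [this] at ht
  have hhg : h⁻¹ * g ∈ K := by
    have : g ∈ (fun x => g * x) '' (H : Set G) := ⟨1, H.one_mem, mul_one g⟩
    rw [heq] at this
    obtain ⟨t, ht, hgt⟩ := this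
    have : t = h⁻¹ * g := by rw [← hgt]; group
    rwa [this] at ht
  ext s
  constructor
  · intro hs
    have : g * s ∈ (fun x => h * x) '' (K : Set G) := heq ▸ ⟨s, hs, rfl⟩
    obtain ⟨k, hk, hgk⟩ := this
    have hs' : s = (h⁻¹ * g)⁻¹ * k := by
      rw [_root_.mul_inv_rev, inv_inv, mul_assoc]
      exact eq_inv_mul_iff_mul_eq.mpr hgk.symm
    rw [hs']
    exact K.mul_mem (K.inv_mem hhg) hk
  · intro hs
    have : h * s ∈ (fun x => g * x) '' (H : Set G) := heq.symm ▸ ⟨s, hs, rfl⟩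
    obtain ⟨t, ht, hgt⟩ := this
    have hs' : s = (g⁻¹ * h)⁻¹ * t := by
      rw [_root_.mul_inv_rev, inv_inv, mul_assoc]
      exact eq_inv_mul_iff_mul_eq.mpr hgt.symm
    rw [hs']
    exact H.mul_mem (H.inv_mem hgh) ht

lemma subgroup_set_eq_of_translate_right {H K : Subgroup G} {g : G}
    (heq : (H : Set G) = (fun x => x * g) '' K) : (H : Set G) = K := by
  have hg : g⁻¹ ∈ K := by
    have : (1 : G) ∈ (H : Set G) := H.one_mem
    rw [heq] at this
    obtain ⟨k, hk, hkg⟩ := this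
    have : k = g⁻¹ := eq_inv_of_mul_eq_one_left hkg
    rwa [this] at hk
  rw [heq]
  ext x
  constructor
  · rintro ⟨k, hk, rfl⟩
    exact K.mul_mem hk (inv_inv g ▸ K.inv_mem hg)
  · intro hx
    exact ⟨x * g⁻¹, K.mul_mem hx hg, by group⟩

-- number of left cosets of H equals index
noncomputable def leftCosetQuotEquiv (H : Subgroup G) :
    (G ⧸ H) ≃ {S : Set G | ∃ g : G, S = (fun x => g * x) '' H} where
  toFun := Quotient.lift (fun g => (⟨(fun x => g * x) '' H, g, rfl⟩ :
      {S : Set G | ∃ g : G, S = (fun x => g * x) '' H}))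
    (by
      intro a b hab
      exact Subtype.ext ((left_translate_eq_iff H).mpr (QuotientGroup.leftRel_apply.mp hab)))
  invFun S := QuotientGroup.mk (Classical.choose S.2)
  left_inv := by
    intro x
    induction x using Quotient.inductionOn with
    | h g =>
      set S : {S : Set G | ∃ g : G, S = (fun x => g * x) '' H} :=
        ⟨(fun x => g * x) '' H, g, rfl⟩ with hS
      have hspec := Classical.choose_spec S.2
      have : (fun x => Classical.choose S.2 * x) '' (H : Set G) = (fun x => g * x) '' H :=
        hspec.symm
      exact Quotient.sound (QuotientGroup.leftRel_apply.mpr ((left_translate_eq_iff H).mp this))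
  right_inv := by
    rintro ⟨S, hS⟩
    have hspec := Classical.choose_spec (⟨S, hS⟩ : {S : Set G | ∃ g : G, S = (fun x => g * x) '' H}).2
    exact Subtype.ext hspec.symm

lemma card_left_cosets (H : Subgroup G) :
    Nat.card {S : Set G | ∃ g : G, S = (fun x => g * x) '' H} = H.index := by
  rw [← Nat.card_congr (leftCosetQuotEquiv H)]
  rfl

end Cosets

section SylowCosets
variable {p : ℕ} {G : Type*} [Group G]

lemma mem_smul_sylow [Fact p.Prime] {x g : G} {T : Sylow p G} :
    x ∈ (g • T : Sylow p G) ↔ g⁻¹ * x * g ∈ T := by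
  have hcoe : ((g • T : Sylow p G) : Subgroup G) = MulAut.conj g • (T : Subgroup G) :=
    Sylow.coe_subgroup_smul
  have : x ∈ (g • T : Sylow p G) ↔ x ∈ (((g • T : Sylow p G)) : Subgroup G) := Iff.rfl
  rw [this, hcoe, Subgroup.mem_pointwise_smul_iff_inv_smul_mem]
  have hc : (MulAut.conj g)⁻¹ • x = g⁻¹ * x * g := by simp [MulAut.conj_inv_apply]
  rw [hc]
  rfl

lemma sylow_left_eq_right [Fact p.Prime] (T : Sylow p G) (g : G) :
    (fun t => g * t) '' (T : Set G) = (fun t => t * g) '' ((g • T : Sylow p G) : Set G) := by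
  ext x
  constructor
  · rintro ⟨t, ht, rfl⟩
    refine ⟨g * t * g⁻¹, ?_, by group⟩
    show g * t * g⁻¹ ∈ (g • T : Sylow p G)
    rw [mem_smul_sylow]
    have : g⁻¹ * (g * t * g⁻¹) * g = t := by group
    rw [this]
    exact ht
  · rintro ⟨s, hs, rfl⟩
    have hs' : g⁻¹ * s * g ∈ T := mem_smul_sylow.mp hs
    exact ⟨g⁻¹ * s * g, hs', by group⟩

end SylowCosets

end SL2Parallelism

open SL2Parallelism in
/-- The natural parallelism ♮: grouping the left cosets of each fixed Sylow
`p`-subgroup of `G = SL(2,q)` into one class also partitions the set of all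
right cosets of all Sylow `p`-subgroups (each right coset `Tg` is a left coset
`g·T^g`) into `q+1` classes of `q²-1` pairwise disjoint cosets each; moreover
♮ ≠ ♭ when `q > 2`. -/
theorem sl2_natural_parallelism (p e : ℕ) (hp : p.Prime) [Fact p.Prime]
    (he : 0 < e) (F : Type) [Field F] [Fintype F] [DecidableEq F]
    (hF : Fintype.card F = p ^ e) :
    ∀ (RightCosets : Set (Set (Matrix.SpecialLinearGroup (Fin 2) F)))
      (flat natural : Set (Set (Set (Matrix.SpecialLinearGroup (Fin 2) F)))),
      RightCosets = {S | ∃ (T : Sylow p (Matrix.SpecialLinearGroup (Fin 2) F))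
          (g : Matrix.SpecialLinearGroup (Fin 2) F),
          S = (fun t => t * g) '' (T : Set (Matrix.SpecialLinearGroup (Fin 2) F))} →
      flat = {C | ∃ T : Sylow p (Matrix.SpecialLinearGroup (Fin 2) F),
          C = {S | ∃ g : Matrix.SpecialLinearGroup (Fin 2) F,
            S = (fun t => t * g) '' (T : Set (Matrix.SpecialLinearGroup (Fin 2) F))}} →
      natural = {C | ∃ T : Sylow p (Matrix.SpecialLinearGroup (Fin 2) F),
          C = {S | ∃ g : Matrix.SpecialLinearGroup (Fin 2) F,
            S = (fun t => g * t) '' (T : Set (Matrix.SpecialLinearGroup (Fin 2) F))}} →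
      (⋃₀ natural = RightCosets ∧
       Nat.card natural = p ^ e + 1 ∧
       (∀ C ∈ natural, Nat.card C = (p ^ e) ^ 2 - 1 ∧
         ∀ S₁ ∈ C, ∀ S₂ ∈ C, S₁ ≠ S₂ → Disjoint S₁ S₂) ∧
       (∀ C₁ ∈ natural, ∀ C₂ ∈ natural, C₁ ≠ C₂ → Disjoint C₁ C₂) ∧
       (2 < p ^ e → natural ≠ flat)) := by
  intro RightCosets flat natural hR hflat hnat
  subst hR hflat hnat
  set G := Matrix.SpecialLinearGroup (Fin 2) F with hG
  -- coercion compatibility: Sylow → Set is via Subgroup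
  have hcoeTS : ∀ T : Sylow p G, (T : Set G) = ((T : Subgroup G) : Set G) := fun _ => rfl
  refine ⟨?_, ?_, ?_, ?_, ?_⟩
  · -- ⋃₀ natural = RightCosets
    ext S
    simp only [Set.mem_sUnion, Set.mem_setOf_eq]
    constructor
    · rintro ⟨C, ⟨T, rfl⟩, g, rfl⟩
      exact ⟨g • T, g, sylow_left_eq_right T g⟩
    · rintro ⟨T, g, rfl⟩
      refine ⟨{S | ∃ g' : G, S = (fun t => g' * t) '' ((g⁻¹ • T : Sylow p G) : Set G)},
        ⟨g⁻¹ • T, rfl⟩, g, ?_⟩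
      rw [sylow_left_eq_right (g⁻¹ • T) g, smul_inv_smul]
  · -- Nat.card natural = q + 1
    have hinj : Function.Injective
        (fun T : Sylow p G => {S | ∃ g : G, S = (fun t => g * t) '' (T : Set G)}) := by
      intro T T' h
      have h' : {S | ∃ g : G, S = (fun t => g * t) '' (T : Set G)}
          = {S | ∃ g : G, S = (fun t => g * t) '' (T' : Set G)} := h
      have hT : (T : Set G) ∈ {S | ∃ g : G, S = (fun t => g * t) '' (T' : Set G)} := by
        rw [← h']
        exact ⟨1, by simp⟩
      obtain ⟨g, hg⟩ := hT
      have h1 : (fun x => (1 : G) * x) '' ((T : Subgroup G) : Set G)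
          = (fun x => g * x) '' ((T' : Subgroup G) : Set G) := by
        simpa using hg
      exact Sylow.ext (SetLike.ext' (subgroup_set_eq_of_translate_eq h1))
    have hrange : {C | ∃ T : Sylow p G, C = {S | ∃ g : G, S = (fun t => g * t) '' (T : Set G)}}
        = Set.range (fun T : Sylow p G =>
            {S | ∃ g : G, S = (fun t => g * t) '' (T : Set G)}) := by
      ext C
      simp [Set.range, eq_comm]
    rw [hrange, Nat.card_range_of_injective hinj]
    exact card_sylow_SL2 p e he hF
  · -- each class has q² - 1 pairwise disjoint cosets
    rintro C ⟨T, rfl⟩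
    constructor
    · have : {S | ∃ g : G, S = (fun t => g * t) '' (T : Set G)}
          = {S : Set G | ∃ g : G, S = (fun x => g * x) '' ((T : Subgroup G) : Set G)} := rfl
      rw [this, card_left_cosets]
      have hmul := Subgroup.card_mul_index (T : Subgroup G)
      have hT : Nat.card (T : Subgroup G) = p ^ e := by
        rw [T.card_eq_multiplicity, padic_card_SL2 p e he hF]
      rw [hT, card_SL2, hF] at hmul
      have hpe : 0 < p ^ e := Nat.pow_pos hp.pos
      exact Nat.eq_of_mul_eq_mul_left hpe hmul
    · rintro S₁ ⟨g, rfl⟩ S₂ ⟨h, rfl⟩ hne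
      exact left_translate_disjoint (T : Subgroup G) hne
  · -- distinct classes are disjoint
    rintro C₁ ⟨T₁, rfl⟩ C₂ ⟨T₂, rfl⟩ hne
    rw [Set.disjoint_left]
    rintro S ⟨g, rfl⟩ ⟨h, hS⟩
    apply hne
    have hT : T₁ = T₂ := by
      have := subgroup_set_eq_of_translate_eq
        (H := (T₁ : Subgroup G)) (K := (T₂ : Subgroup G)) hS
      exact Sylow.ext (SetLike.ext' this)
    rw [hT]
  · -- natural ≠ flat
    intro _ hnatflat
    -- the standard Sylow subgroup
    have h0 : (![1, (0:F)] : Fin 2 → F) ≠ 0 := vecOf_ne_zero (some 0)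
    set U : Sylow p G := sylowFix p e he hF ![1, 0] h0 with hU
    have hUmem : ∀ x : G, x ∈ U ↔ x ∈ fixv ![1, 0] := fun x => Iff.rfl
    -- the class of U in natural is a class in flat
    have hmem : {S | ∃ g : G, S = (fun t => g * t) '' (U : Set G)}
        ∈ {C | ∃ T : Sylow p G, C = {S | ∃ g : G,
            S = (fun t => t * g) '' (T : Set G)}} := by
      rw [← hnatflat]
      exact ⟨U, rfl⟩
    obtain ⟨T', hT'⟩ := hmem
    have hUcls : (U : Set G) ∈ {S | ∃ g : G, S = (fun t => g * t) '' (U : Set G)} :=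
      ⟨1, by simp⟩
    rw [hT'] at hUcls
    obtain ⟨g0, hg0⟩ := hUcls
    have hUT' : ((U : Subgroup G) : Set G) = ((T' : Subgroup G) : Set G) :=
      subgroup_set_eq_of_translate_right hg0
    -- explicit elements
    set gm : G := ⟨!![(0:F), 1; -1, 0], by simp [Matrix.det_fin_two]⟩ with hgm
    set u : G := ⟨!![(1:F), 1; 0, 1], by simp [Matrix.det_fin_two]⟩ with hu
    have hu_mem : u ∈ U := by
      rw [hUmem, mem_fixv]
      funext i
      fin_cases i <;> simp [hu, Matrix.mulVec, dotProduct, Fin.sum_univ_two]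
    -- gm·U is in the class of U, hence a right coset of T' = U
    have hgmU : (fun t => gm * t) '' (U : Set G)
        ∈ {S | ∃ g : G, S = (fun t => t * g) '' (T' : Set G)} := by
      rw [← hT']
      exact ⟨gm, rfl⟩
    obtain ⟨h, hh⟩ := hgmU
    rw [hcoeTS T', ← hUT'] at hh
    -- gm ∈ LHS
    have hgmem : gm ∈ (fun t => gm * t) '' (U : Set G) :=
      ⟨1, Subgroup.one_mem _, mul_one gm⟩
    rw [hh] at hgmem
    obtain ⟨u0, hu0, hu0h⟩ := hgmem
    -- gm * u ∈ LHS
    have hgumem : gm * u ∈ (fun t => gm * t) '' (U : Set G) := ⟨u, hu_mem, rfl⟩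
    rw [hh] at hgumem
    obtain ⟨u1, hu1, hu1h⟩ := hgumem
    -- t := u1 * u0⁻¹ satisfies t * gm = gm * u
    set t : G := u1 * u0⁻¹ with ht
    have htU : t ∈ fixv ![1, 0] := by
      have h1 : u1 ∈ fixv ![1, 0] := hu1
      have h0' : u0 ∈ fixv ![1, 0] := hu0
      exact (fixv ![1, 0]).mul_mem h1 ((fixv ![1, 0]).inv_mem h0')
    have htg : t * gm = gm * u := by
      have hhval : h = u0⁻¹ * gm := by
        rw [eq_inv_mul_iff_mul_eq]
        exact hu0h
      rw [ht, ← hu1h, hhval]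
      group
    -- apply to the vector ![1,0]
    have hvec : (t : Matrix (Fin 2) (Fin 2) F) *ᵥ ((gm : Matrix (Fin 2) (Fin 2) F) *ᵥ ![1, 0])
        = (gm : Matrix (Fin 2) (Fin 2) F) *ᵥ ((u : Matrix (Fin 2) (Fin 2) F) *ᵥ ![1, 0]) := by
      rw [Matrix.mulVec_mulVec, Matrix.mulVec_mulVec, ← Matrix.SpecialLinearGroup.coe_mul,
        ← Matrix.SpecialLinearGroup.coe_mul, htg]
    have hgv : (gm : Matrix (Fin 2) (Fin 2) F) *ᵥ ![1, 0] = ![0, -1] := by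
      funext i
      fin_cases i <;> simp [hgm, Matrix.mulVec, dotProduct, Fin.sum_univ_two]
    have hu_fix : u ∈ fixv ![1, 0] := hu_mem
    have huv : (u : Matrix (Fin 2) (Fin 2) F) *ᵥ ![1, 0] = ![1, 0] := hu_fix
    rw [hgv, huv, hgv] at hvec
    -- so t fixes ![0,-1], hence ![0,1]
    have ht01 : t ∈ fixv ![0, 1] := by
      have hsc : ((-1 : F)) • ![(0:F), 1] = ![0, -1] := by
        funext i; fin_cases i <;> simp
      have : t ∈ fixv ((-1 : F) • ![(0:F), 1]) := by
        rw [mem_fixv, hsc]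
        exact hvec
      rwa [fixv_smul (-1) (neg_ne_zero.mpr one_ne_zero)] at this
    have ht1 : t = 1 :=
      eq_one_of_fix_indep (x := 0) (y := 0) htU ht01 (Or.inr ⟨rfl, rfl⟩)
    rw [ht1, one_mul] at htg
    have : u = 1 := by
      have := htg.symm
      rwa [mul_eq_left] at this
    have hcontra := congrArg (fun A : G => (A : Matrix (Fin 2) (Fin 2) F) 0 1) this
    simp [hu, Matrix.one_apply] at hcontra
end

section
/- The classical unital (Hermitian unital) of order q contains no O'Nan configuration: there do not exist four distinct blocks meeting pairwise in six distinct points. -/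
/-!
Let `σ a = a ^ q` be the involutory Frobenius of `𝔽_{q²}` and `h x y = ∑ xᵢ σ(yᵢ)`. In an O'Nan
configuration the points `p₁₂, p₁₃, p₂₃` give a triangle of isotropic vectors `u, v, w`, and the
fourth block is a line meeting its three sides in isotropic points other than the vertices. The
point `a u + b v` is isotropic exactly when `A = a σ(b) h(u,v)` is traceless (`σ A = -A`), and
likewise on the other two sides. Collinearity of the three side points makes `A σ(B) C` equal to
`m z` with `z = h(u,v) σ(h(u,w)) h(v,w)` and `m` nonzero and `σ`-fixed; as `A σ(B) C` is traceless
with `A, B, C`, so is `z`. But `z + σ z` is the Gram determinant of `u, v, w`, which equals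
`det(u,v,w) σ(det(u,v,w)) ≠ 0`.
-/

namespace HermitianUnital

variable {K : Type*} [Field K]

section HermitianForm

variable {n : Type*} [Fintype n] (σ : K →+* K)

def herm (x y : n → K) : K := ∑ i, x i * σ (y i)

variable {σ}

lemma map_herm (hσ : ∀ a, σ (σ a) = a) (x y : n → K) : σ (herm σ x y) = herm σ y x := by
  simp only [herm, map_sum, map_mul, hσ, mul_comm]

lemma herm_smul_add_smul_self_of_isotropic (hσ : ∀ a, σ (σ a) = a) {u v : n → K}
    (hu : herm σ u u = 0) (hv : herm σ v v = 0) (a b : K) :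
    herm σ (a • u + b • v) (a • u + b • v) = a * σ b * herm σ u v + σ (a * σ b * herm σ u v) := by
  have h : herm σ (a • u + b • v) (a • u + b • v) = a * σ a * herm σ u u
      + a * σ b * herm σ u v + b * σ a * herm σ v u + b * σ b * herm σ v v := by
    simp only [herm, Finset.mul_sum, ← Finset.sum_add_distrib]
    refine Finset.sum_congr rfl fun i _ => ?_
    simp only [Pi.add_apply, Pi.smul_apply, smul_eq_mul, map_add, map_mul]
    ring
  rw [h, hu, hv, map_mul, map_mul, hσ, map_herm hσ]
  ring

lemma det_gram [DecidableEq n] (v : n → n → K) :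
    (Matrix.of fun i j => herm σ (v i) (v j)).det = (Matrix.of v).det * σ (Matrix.of v).det := by
  have h : (Matrix.of fun i j => herm σ (v i) (v j)) =
      Matrix.of v * (σ.mapMatrix (Matrix.of v)).transpose := by
    ext i j
    simp [herm, Matrix.mul_apply]
  rw [h, Matrix.det_mul, Matrix.det_transpose, RingHom.map_det]

lemma det_gram_ne_zero [DecidableEq n] {v : n → n → K} (hv : LinearIndependent K v) :
    (Matrix.of fun i j => herm σ (v i) (v j)).det ≠ 0 := by
  have hdet : (Matrix.of v).det ≠ 0 :=
    ((Matrix.isUnit_iff_isUnit_det _).1 (Matrix.linearIndependent_rows_iff_isUnit.1 hv)).ne_zero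
  rw [det_gram]
  exact mul_ne_zero hdet ((map_ne_zero σ).2 hdet)

lemma det_gram_fin_three_of_isotropic (hσ : ∀ a, σ (σ a) = a) {u v w : Fin 3 → K}
    (hu : herm σ u u = 0) (hv : herm σ v v = 0) (hw : herm σ w w = 0) :
    (Matrix.of fun i j => herm σ (![u, v, w] i) (![u, v, w] j)).det =
      herm σ u v * σ (herm σ u w) * herm σ v w + σ (herm σ u v * σ (herm σ u w) * herm σ v w) := by
  rw [Matrix.det_fin_three]
  simp only [Matrix.of_apply, Matrix.cons_val_zero, Matrix.cons_val_one, Matrix.cons_val_two,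
    Matrix.head_cons, Matrix.tail_cons, hu, hv, hw, ← map_herm hσ u v, ← map_herm hσ u w,
    ← map_herm hσ v w, map_mul, hσ]
  ring

end HermitianForm

variable {σ : K →+* K}

lemma map_mul_map_mul_eq_neg (hσ : ∀ a, σ (σ a) = a) {a b c : K}
    (ha : σ a = -a) (hb : σ b = -b) (hc : σ c = -c) : σ (a * σ b * c) = -(a * σ b * c) := by
  rw [map_mul, map_mul, hσ, ha, hb, hc]
  ring

lemma map_eq_neg_of_map_mul_eq_neg {m z : K} (hm : σ m = m) (hm0 : m ≠ 0)
    (h : σ (m * z) = -(m * z)) : σ z = -z :=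
  mul_left_cancel₀ hm0 (by rw [mul_neg, ← h, map_mul, hm])

theorem false_of_isotropic_transversal (hσ : ∀ a, σ (σ a) = a) {u v w : Fin 3 → K}
    (huvw : LinearIndependent K ![u, v, w])
    (hu : herm σ u u = 0) (hv : herm σ v v = 0) (hw : herm σ w w = 0)
    {x₁ y₁ x₂ y₂ x₃ y₃ c d : K} (hx₁ : x₁ ≠ 0) (hy₁ : y₁ ≠ 0) (hy₂ : y₂ ≠ 0) (hx₃ : x₃ ≠ 0)
    (hs : herm σ (x₁ • u + y₁ • v) (x₁ • u + y₁ • v) = 0)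
    (ht : herm σ (x₂ • u + y₂ • w) (x₂ • u + y₂ • w) = 0)
    (hr : herm σ (x₃ • v + y₃ • w) (x₃ • v + y₃ • w) = 0)
    (hcol : x₃ • v + y₃ • w = c • (x₁ • u + y₁ • v) + d • (x₂ • u + y₂ • w)) : False := by
  obtain ⟨e₁, e₂, e₃⟩ : c * x₁ + d * x₂ = 0 ∧ c * y₁ - x₃ = 0 ∧ d * y₂ - y₃ = 0 := by
    have h := Fintype.linearIndependent_iff.1 huvw ![c * x₁ + d * x₂, c * y₁ - x₃, d * y₂ - y₃]
      (by simp only [Fin.sum_univ_three, Matrix.cons_val]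
          linear_combination (norm := module) -hcol)
    exact ⟨h 0, h 1, h 2⟩
  rw [herm_smul_add_smul_self_of_isotropic hσ hu hv] at hs
  rw [herm_smul_add_smul_self_of_isotropic hσ hu hw] at ht
  rw [herm_smul_add_smul_self_of_isotropic hσ hv hw] at hr
  set α := herm σ u v
  set β := herm σ u w
  set γ := herm σ v w
  have hABC := map_mul_map_mul_eq_neg hσ (eq_neg_of_add_eq_zero_right hs)
    (eq_neg_of_add_eq_zero_right ht) (eq_neg_of_add_eq_zero_right hr)
  -- a product of norms `t σ(t)`, hence `σ`-fixed
  set m := -(x₁ * c * σ (x₁ * c) * (y₁ * σ y₁) * (y₂ * σ y₂))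
  have hm : σ m = m := by simp only [m, map_neg, map_mul, hσ]; ring
  have hm0 : m ≠ 0 := by
    have hc : c ≠ 0 := by rintro rfl; exact hx₃ (by linear_combination -e₂)
    simp only [m, neg_ne_zero, mul_ne_zero_iff, map_ne_zero]
    tauto
  have hfactor : x₁ * σ y₁ * α * σ (x₂ * σ y₂ * β) * (x₃ * σ y₃ * γ) = m * (α * σ β * γ) := by
    have e₁' : σ c * σ x₁ + σ d * σ x₂ = 0 := by simpa using congrArg σ e₁
    rw [show x₃ = c * y₁ by linear_combination -e₂, show y₃ = d * y₂ by linear_combination -e₃]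
    simp only [m, map_mul, hσ]
    linear_combination (x₁ * c * y₁ * σ y₁ * y₂ * σ y₂ * α * σ β * γ) * e₁'
  have hz := map_eq_neg_of_map_mul_eq_neg hm hm0 (by rwa [hfactor] at hABC)
  apply det_gram_ne_zero (σ := σ) huvw
  rw [det_gram_fin_three_of_isotropic hσ hu hv hw, hz, add_neg_cancel]

section Projective

open Projectivization Submodule
open scoped LinearAlgebra.Projectivization

variable {V : Type*} [AddCommGroup V] [Module K V]

lemma span_pair_eq_of_mem {a b x y : V} (hx : x ∈ span K {a, b}) (hy : y ∈ span K {a, b})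
    (hxy : LinearIndependent K ![x, y]) : span K {x, y} = span K {a, b} := by
  have := FiniteDimensional.span_of_finite K (Set.toFinite {a, b})
  refine eq_of_le_of_finrank_le
    (span_le.2 (Set.insert_subset hx (Set.singleton_subset_iff.2 hy))) ?_
  have hab := finrank_range_le_card (R := K) ![a, b]
  have hxy' := finrank_span_eq_card hxy
  rw [Set.finrank, Matrix.range_cons_cons_empty] at hab
  rw [Matrix.range_cons_cons_empty] at hxy'
  simp only [Fintype.card_fin] at hab hxy'
  omega

lemma linearIndependent_triple_of_notMem_span {a b c : V} (hab : LinearIndependent K ![a, b])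
    (hc : c ∉ span K {a, b}) : LinearIndependent K ![a, b, c] := by
  have h := linearIndependent_finSnoc.2 ⟨hab, by rwa [Matrix.range_cons_cons_empty]⟩
  convert h using 1
  ext i
  fin_cases i <;> rfl

lemma eq_of_rep_eq_smul {P Q : ℙ K V} {a : K} (h : P.rep = a • Q.rep) : P = Q := by
  by_contra hPQ
  have := LinearIndependent.pair_iff.1 (linearIndependent_pair_iff_ne.2 hPQ) 1 (-a)
    (by rw [h, one_smul, neg_smul, add_neg_cancel])
  exact one_ne_zero this.1

lemma exists_rep_eq_smul_add_smul {P Q R : ℙ K V} (hR : R.rep ∈ span K {P.rep, Q.rep})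
    (hRP : R ≠ P) (hRQ : R ≠ Q) : ∃ x y : K, x ≠ 0 ∧ y ≠ 0 ∧ R.rep = x • P.rep + y • Q.rep := by
  obtain ⟨x, y, hxy⟩ := mem_span_pair.1 hR
  refine ⟨x, y, ?_, ?_, hxy.symm⟩
  · rintro rfl
    exact hRQ (eq_of_rep_eq_smul (by rw [← hxy, zero_smul, zero_add]))
  · rintro rfl
    exact hRP (eq_of_rep_eq_smul (by rw [← hxy, zero_smul, add_zero]))

end Projective

lemma exists_involutive_ringHom_pow {p e : ℕ} (hp : p.Prime) (K : Type*) [Field K] [Fintype K]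
    (hK : Fintype.card K = (p ^ e) ^ 2) :
    ∃ σ : K →+* K, (∀ a, σ (σ a) = a) ∧ ∀ a, σ a = a ^ p ^ e := by
  have : Fact p.Prime := ⟨hp⟩
  have : CharP K p := charP_of_card_eq_prime_pow (hK.trans (pow_mul p e 2).symm)
  refine ⟨iterateFrobenius K p e, fun a => ?_, fun a => rfl⟩
  rw [iterateFrobenius_def, iterateFrobenius_def, ← pow_mul, ← sq, ← hK, FiniteField.pow_card]

lemma herm_self_eq_sum_pow {σ : K →+* K} {q : ℕ} (hσ : ∀ a, σ a = a ^ q) (x : Fin 3 → K) :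
    herm σ x x = x 0 ^ (q + 1) + x 1 ^ (q + 1) + x 2 ^ (q + 1) := by
  simp only [herm, Fin.sum_univ_three, hσ, pow_succ']

end HermitianUnital

open HermitianUnital Projectivization Submodule in
theorem hermitian_unital_no_onan_general (p e : ℕ) (hp : p.Prime)
    (q : ℕ) (hq : q = p ^ e)
    (K : Type) [Field K] [Fintype K] (hK : Fintype.card K = q ^ 2) :
    ∀ (U : Set (Projectivization K (Fin 3 → K)))
      (Blocks : Set (Set (Projectivization K (Fin 3 → K)))),
      U = {P | P.rep 0 ^ (q + 1) + P.rep 1 ^ (q + 1) + P.rep 2 ^ (q + 1) = 0} →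
      Blocks = {b | ∃ P ∈ U, ∃ Q ∈ U, P ≠ Q ∧
        b = {R ∈ U | R.rep ∈ Submodule.span K {P.rep, Q.rep}}} →
      ¬ ∃ b₁ ∈ Blocks, ∃ b₂ ∈ Blocks, ∃ b₃ ∈ Blocks, ∃ b₄ ∈ Blocks,
        ∃ p₁₂ p₁₃ p₁₄ p₂₃ p₂₄ p₃₄ : Projectivization K (Fin 3 → K),
          b₁ ≠ b₂ ∧ b₁ ≠ b₃ ∧ b₁ ≠ b₄ ∧ b₂ ≠ b₃ ∧ b₂ ≠ b₄ ∧ b₃ ≠ b₄ ∧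
          p₁₂ ≠ p₁₃ ∧ p₁₂ ≠ p₁₄ ∧ p₁₂ ≠ p₂₃ ∧ p₁₂ ≠ p₂₄ ∧ p₁₂ ≠ p₃₄ ∧
          p₁₃ ≠ p₁₄ ∧ p₁₃ ≠ p₂₃ ∧ p₁₃ ≠ p₂₄ ∧ p₁₃ ≠ p₃₄ ∧
          p₁₄ ≠ p₂₃ ∧ p₁₄ ≠ p₂₄ ∧ p₁₄ ≠ p₃₄ ∧
          p₂₃ ≠ p₂₄ ∧ p₂₃ ≠ p₃₄ ∧ p₂₄ ≠ p₃₄ ∧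
          p₁₂ ∈ b₁ ∧ p₁₂ ∈ b₂ ∧ p₁₃ ∈ b₁ ∧ p₁₃ ∈ b₃ ∧ p₁₄ ∈ b₁ ∧ p₁₄ ∈ b₄ ∧
          p₂₃ ∈ b₂ ∧ p₂₃ ∈ b₃ ∧ p₂₄ ∈ b₂ ∧ p₂₄ ∈ b₄ ∧ p₃₄ ∈ b₃ ∧ p₃₄ ∈ b₄ := by
  rintro U Blocks rfl rfl ⟨_, ⟨P₁, -, Q₁, -, -, rfl⟩, _, ⟨P₂, -, Q₂, -, -, rfl⟩,
    _, ⟨P₃, -, Q₃, -, -, rfl⟩, _, ⟨P₄, -, Q₄, -, -, rfl⟩, p₁₂, p₁₃, p₁₄, p₂₃, p₂₄, p₃₄,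
    hb₁₂, -, -, -, -, -, h₁₂₁₃, h₁₂₁₄, h₁₂₂₃, h₁₂₂₄, -, h₁₃₁₄, h₁₃₂₃, -, h₁₃₃₄, -, h₁₄₂₄, -,
    h₂₃₂₄, h₂₃₃₄, -, m₁₂₁, m₁₂₂, m₁₃₁, m₁₃₃, m₁₄₁, m₁₄₄, m₂₃₂, m₂₃₃, m₂₄₂, m₂₄₄, m₃₄₃, m₃₄₄⟩
  obtain ⟨σ, hσσ, hσ⟩ := exists_involutive_ringHom_pow hp K (hq ▸ hK)
  have hiso {R : Projectivization K (Fin 3 → K)} (hR : R.rep 0 ^ (q + 1) + R.rep 1 ^ (q + 1)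
      + R.rep 2 ^ (q + 1) = 0) : herm σ R.rep R.rep = 0 :=
    (herm_self_eq_sum_pow (hq ▸ hσ) _).trans hR
  have hW₁ := span_pair_eq_of_mem m₁₂₁.2 m₁₃₁.2 (linearIndependent_pair_iff_ne.2 h₁₂₁₃)
  have hW₂ := span_pair_eq_of_mem m₁₂₂.2 m₂₃₂.2 (linearIndependent_pair_iff_ne.2 h₁₂₂₃)
  have hW₃ := span_pair_eq_of_mem m₁₃₃.2 m₂₃₃.2 (linearIndependent_pair_iff_ne.2 h₁₃₂₃)
  have hW₄ := span_pair_eq_of_mem m₁₄₄.2 m₂₄₄.2 (linearIndependent_pair_iff_ne.2 h₁₄₂₄)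
  have htri : LinearIndependent K ![p₁₂.rep, p₁₃.rep, p₂₃.rep] := by
    refine linearIndependent_triple_of_notMem_span (linearIndependent_pair_iff_ne.2 h₁₂₁₃)
      fun h => hb₁₂ ?_
    rw [← hW₁, ← hW₂, span_pair_eq_of_mem (subset_span (by simp)) h
      (linearIndependent_pair_iff_ne.2 h₁₂₂₃)]
  obtain ⟨x₁, y₁, hx₁, hy₁, h₁₄⟩ :=
    exists_rep_eq_smul_add_smul (hW₁ ▸ m₁₄₁.2) h₁₂₁₄.symm h₁₃₁₄.symm
  obtain ⟨x₂, y₂, -, hy₂, h₂₄⟩ :=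
    exists_rep_eq_smul_add_smul (hW₂ ▸ m₂₄₂.2) h₁₂₂₄.symm h₂₃₂₄.symm
  obtain ⟨x₃, y₃, hx₃, -, h₃₄⟩ :=
    exists_rep_eq_smul_add_smul (hW₃ ▸ m₃₄₃.2) h₁₃₃₄.symm h₂₃₃₄.symm
  obtain ⟨c, d, hcol⟩ := mem_span_pair.1 (hW₄ ▸ m₃₄₄.2)
  rw [h₁₄, h₂₄, h₃₄] at hcol
  exact false_of_isotropic_transversal hσσ htri (hiso m₁₂₁.1) (hiso m₁₃₁.1) (hiso m₂₃₂.1)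
    hx₁ hy₁ hy₂ hx₃ (h₁₄ ▸ hiso m₁₄₁.1) (h₂₄ ▸ hiso m₂₄₂.1) (h₃₄ ▸ hiso m₃₄₃.1) hcol.symm

/-- The Hermitian (classical) unital of order `q` — whose points are the points
of the Hermitian curve `x^{q+1} + y^{q+1} + z^{q+1} = 0` in `PG(2,q²)` and
whose blocks are the intersections of secant lines with the curve — contains
no O'Nan configuration: there are no four distinct blocks meeting pairwise in
six distinct points. -/
theorem hermitian_unital_no_onan (p e : ℕ) (hp : p.Prime) (he : 0 < e)
    (q : ℕ) (hq : q = p ^ e)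
    (K : Type) [Field K] [Fintype K] (hK : Fintype.card K = q ^ 2) :
    ∀ (U : Set (Projectivization K (Fin 3 → K)))
      (Blocks : Set (Set (Projectivization K (Fin 3 → K)))),
      U = {P | P.rep 0 ^ (q + 1) + P.rep 1 ^ (q + 1) + P.rep 2 ^ (q + 1) = 0} →
      Blocks = {b | ∃ P ∈ U, ∃ Q ∈ U, P ≠ Q ∧
        b = {R ∈ U | R.rep ∈ Submodule.span K {P.rep, Q.rep}}} →
      ¬ ∃ b₁ ∈ Blocks, ∃ b₂ ∈ Blocks, ∃ b₃ ∈ Blocks, ∃ b₄ ∈ Blocks,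
        ∃ p₁₂ p₁₃ p₁₄ p₂₃ p₂₄ p₃₄ : Projectivization K (Fin 3 → K),
          b₁ ≠ b₂ ∧ b₁ ≠ b₃ ∧ b₁ ≠ b₄ ∧ b₂ ≠ b₃ ∧ b₂ ≠ b₄ ∧ b₃ ≠ b₄ ∧
          p₁₂ ≠ p₁₃ ∧ p₁₂ ≠ p₁₄ ∧ p₁₂ ≠ p₂₃ ∧ p₁₂ ≠ p₂₄ ∧ p₁₂ ≠ p₃₄ ∧
          p₁₃ ≠ p₁₄ ∧ p₁₃ ≠ p₂₃ ∧ p₁₃ ≠ p₂₄ ∧ p₁₃ ≠ p₃₄ ∧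
          p₁₄ ≠ p₂₃ ∧ p₁₄ ≠ p₂₄ ∧ p₁₄ ≠ p₃₄ ∧
          p₂₃ ≠ p₂₄ ∧ p₂₃ ≠ p₃₄ ∧ p₂₄ ≠ p₃₄ ∧
          p₁₂ ∈ b₁ ∧ p₁₂ ∈ b₂ ∧ p₁₃ ∈ b₁ ∧ p₁₃ ∈ b₃ ∧ p₁₄ ∈ b₁ ∧ p₁₄ ∈ b₄ ∧
          p₂₃ ∈ b₂ ∧ p₂₃ ∈ b₃ ∧ p₂₄ ∈ b₂ ∧ p₂₄ ∈ b₄ ∧ p₃₄ ∈ b₃ ∧ p₃₄ ∈ b₄ :=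
  hermitian_unital_no_onan_general p e hp q hq K hK
end
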